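/- arXiv:2207.04637 — 3 statements merged into one kernel-verified Lean document; each statement's English description precedes it below -/
import Mathlib

section
/- Let R be a commutative ring, n_o and w positive natural numbers, n_i = n_o·w, N : Fin n_o → Fin n_i → R a matrix, and t : Fin n_i → R a vector. For each j < n_o define the j-th diagonal encoding D_j : Fin n_i → R by D_j(k) = N(k mod n_o, (k + j) mod n_i) and the j-step rotated input t⁽ʲ⁾(k) = t((k + j) mod n_i). Then for every output row r < n_o: Σ_{b<w} Σ_{j<n_o} D_j(r + b·n_o) · t⁽ʲ⁾(r + b·n_o) = Σ_{c<n_i} N(r, c) · t(c), i.e., summing the entrywise products of the diagonals with the rotated inputs over all positions congruent to r modulo n_o yields the r-th entry of the matrix–vector product N·t. -/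
theorem diagonal_encoding_correct {R : Type*} [CommRing R]
    (n_o w : ℕ) (hno : 0 < n_o) (hw : 0 < w)
    (N : Fin n_o → Fin (n_o * w) → R) (t : Fin (n_o * w) → R)
    (r : Fin n_o) :
    ∑ b : Fin w, ∑ j : Fin n_o,
      (N ⟨(r.val + b.val * n_o) % n_o, Nat.mod_lt _ hno⟩
          ⟨((r.val + b.val * n_o) + j.val) % (n_o * w),
            Nat.mod_lt _ (Nat.mul_pos hno hw)⟩)
        * t ⟨((r.val + b.val * n_o) + j.val) % (n_o * w),
              Nat.mod_lt _ (Nat.mul_pos hno hw)⟩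
    = ∑ c : Fin (n_o * w), N r c * t c := by
  have hni : 0 < n_o * w := Nat.mul_pos hno hw
  let f : Fin w × Fin n_o → Fin (n_o * w) := fun p =>
    ⟨(r.val + p.1.val * n_o + p.2.val) % (n_o * w), Nat.mod_lt _ hni⟩
  have hinj : Function.Injective f := by
    rintro ⟨b1, j1⟩ ⟨b2, j2⟩ h
    have h' : (r.val + b1.val * n_o + j1.val) % (n_o * w)
        = (r.val + b2.val * n_o + j2.val) % (n_o * w) := congrArg Fin.val h
    have e1 : ∀ (b j : ℕ), r.val + b * n_o + j = (r.val + j) + b * n_o := by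
      intro b j; ring
    have h1 : (r.val + j1.val) % n_o = (r.val + j2.val) % n_o := by
      have := congrArg (· % n_o) h'
      simpa [Nat.mod_mod_of_dvd _ ⟨w, rfl⟩, e1, Nat.add_mul_mod_self_right] using this
    have hj : j1 = j2 := by
      have hm : j1.val ≡ j2.val [MOD n_o] := Nat.ModEq.add_left_cancel' r.val h1
      have : j1.val % n_o = j2.val % n_o := hm
      rw [Nat.mod_eq_of_lt j1.isLt, Nat.mod_eq_of_lt j2.isLt] at this
      exact Fin.ext this
    subst hj
    have h2 : (b1.val * n_o) % (n_o * w) = (b2.val * n_o) % (n_o * w) := by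
      have hm : ((r.val + j1.val) + b1.val * n_o) ≡ ((r.val + j1.val) + b2.val * n_o)
          [MOD n_o * w] := by
        rw [← e1, ← e1]; exact h'
      exact Nat.ModEq.add_left_cancel' _ hm
    have h3 : n_o * (b1.val % w) = n_o * (b2.val % w) := by
      have := h2
      rw [mul_comm b1.val n_o, mul_comm b2.val n_o, Nat.mul_mod_mul_left,
        Nat.mul_mod_mul_left] at this
      exact this
    have hb : b1 = b2 := by
      have := Nat.eq_of_mul_eq_mul_left hno h3
      rw [Nat.mod_eq_of_lt b1.isLt, Nat.mod_eq_of_lt b2.isLt] at this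
      exact Fin.ext this
    rw [hb]
  have hbij : Function.Bijective f :=
    (Fintype.bijective_iff_injective_and_card f).2 ⟨hinj, by simp [mul_comm]⟩
  have step1 : (∑ b : Fin w, ∑ j : Fin n_o,
      (N ⟨(r.val + b.val * n_o) % n_o, Nat.mod_lt _ hno⟩
          ⟨((r.val + b.val * n_o) + j.val) % (n_o * w), Nat.mod_lt _ hni⟩)
        * t ⟨((r.val + b.val * n_o) + j.val) % (n_o * w), Nat.mod_lt _ hni⟩)
      = ∑ p : Fin w × Fin n_o,
      (N ⟨(r.val + p.1.val * n_o) % n_o, Nat.mod_lt _ hno⟩ (f p)) * t (f p) :=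
    (Fintype.sum_prod_type (f := fun p : Fin w × Fin n_o =>
      (N ⟨(r.val + p.1.val * n_o) % n_o, Nat.mod_lt _ hno⟩ (f p)) * t (f p))).symm
  rw [step1]
  refine Fintype.sum_bijective f hbij _ (fun c => N r c * t c) (fun p => ?_)
  have hr : (r.val + p.1.val * n_o) % n_o = r.val := by
    rw [Nat.add_mul_mod_self_right, Nat.mod_eq_of_lt r.isLt]
  have hre : (⟨(r.val + p.1.val * n_o) % n_o, Nat.mod_lt _ hno⟩ : Fin n_o) = r :=
    Fin.ext hr
  rw [hre]
end

section
/- Let R be a commutative ring, l and w positive natural numbers, n_i = l·w, N : Fin l → Fin n_i → R a block of l matrix rows, and t : Fin n_i → R a vector. For each j < l define the encoded vector M_j : Fin n_i → R by M_j(k) = N(⌊k/w⌋, (k + j·w) mod n_i) and the rotated input t⁽ʲ⁾(k) = t((k + j·w) mod n_i). Then for every row r < l: Σ_{b<w} Σ_{j<l} M_j(r·w + b) · t⁽ʲ⁾(r·w + b) = Σ_{c<n_i} N(r, c) · t(c), i.e., summing the entrywise products over the w consecutive positions r·w, r·w+1, …, r·w+w−1 recovers the r-th entry of the matrix–vector product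 N·t. -/
theorem block_diagonal_encoding_correct {R : Type*} [CommRing R]
    (l w : ℕ) (hl : 0 < l) (hw : 0 < w)
    (N : Fin l → Fin (l * w) → R) (t : Fin (l * w) → R)
    (r : Fin l) :
    ∑ b : Fin w, ∑ j : Fin l,
      (N ⟨(r.val * w + b.val) / w,
            (Nat.div_lt_iff_lt_mul hw).mpr
              (by have hr := r.isLt; have hb := b.isLt; nlinarith)⟩
          ⟨((r.val * w + b.val) + j.val * w) % (l * w),
            Nat.mod_lt _ (Nat.mul_pos hl hw)⟩)
        * t ⟨((r.val * w + b.val) + j.val * w) % (l * w),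
              Nat.mod_lt _ (Nat.mul_pos hl hw)⟩
    = ∑ c : Fin (l * w), N r c * t c := by
  have hlw : 0 < l * w := Nat.mul_pos hl hw
  -- the row index is always r
  have hrow : ∀ b : Fin w, (r.val * w + b.val) / w = r.val := by
    intro b
    rw [mul_comm, Nat.mul_add_div hw, Nat.div_eq_of_lt b.isLt, add_zero]
  -- key arithmetic: normal form of the rotated index
  have hkey : ∀ (b : Fin w) (j : Fin l),
      ((r.val * w + b.val) + j.val * w) % (l * w)
        = b.val + ((r.val + j.val) % l) * w := by
    intro b j
    have h1 : (r.val * w + b.val) + j.val * w = b.val + (r.val + j.val) * w := by ring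
    have h2 : b.val + (r.val + j.val) * w
        = b.val + ((r.val + j.val) % l) * w + ((r.val + j.val) / l) * (l * w) := by
      conv_lhs => rw [← Nat.mod_add_div (r.val + j.val) l]
      ring
    have hlt : b.val + ((r.val + j.val) % l) * w < l * w := by
      have h3 : (r.val + j.val) % l < l := Nat.mod_lt _ hl
      have h4 : ((r.val + j.val) % l) * w ≤ (l - 1) * w :=
        Nat.mul_le_mul_right _ (Nat.le_sub_one_of_lt h3)
      have hb := b.isLt
      have : (l - 1) * w + w = l * w := by
        cases l with
        | zero => omega
        | succ n => simp [Nat.succ_sub_one, Nat.succ_mul]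
      omega
    rw [h1, h2, Nat.add_mul_mod_self_right, Nat.mod_eq_of_lt hlt]
  -- the bijection
  set f : Fin w × Fin l → Fin (l * w) := fun p =>
    ⟨((r.val * w + p.1.val) + p.2.val * w) % (l * w), Nat.mod_lt _ hlw⟩ with hf
  have hinj : Function.Injective f := by
    intro ⟨b, j⟩ ⟨b', j'⟩ h
    simp only [hf, Fin.mk.injEq] at h
    rw [hkey b j, hkey b' j'] at h
    have hb : b.val = b'.val ∧ (r.val + j.val) % l = (r.val + j'.val) % l := by
      constructor
      · have := congrArg (· % w) h
        simpa [Nat.add_mul_mod_self_right, Nat.mod_eq_of_lt b.isLt,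
          Nat.mod_eq_of_lt b'.isLt] using this
      · have := congrArg (· / w) h
        simpa [Nat.add_mul_div_right _ _ hw, Nat.div_eq_of_lt b.isLt,
          Nat.div_eq_of_lt b'.isLt] using this
    have hj : j.val = j'.val := by
      have hmod := hb.2
      have : j.val % l = j'.val % l := by
        have h1 : (r.val + j.val) % l = (r.val % l + j.val % l) % l := Nat.add_mod _ _ _
        have h2 : (r.val + j'.val) % l = (r.val % l + j'.val % l) % l := Nat.add_mod _ _ _
        have hc : Nat.ModEq l (r.val + j.val) (r.val + j'.val) := hmod
        have := (Nat.ModEq.add_left_cancel' r.val hc)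
        exact this
      rwa [Nat.mod_eq_of_lt j.isLt, Nat.mod_eq_of_lt j'.isLt] at this
    exact Prod.ext (Fin.ext hb.1) (Fin.ext hj)
  have hbij : Function.Bijective f := by
    rw [Fintype.bijective_iff_injective_and_card]
    exact ⟨hinj, by simp [Fintype.card_prod, mul_comm]⟩
  have := Fintype.sum_bijective f hbij
    (fun p => N r (f p) * t (f p)) (fun c => N r c * t c) (fun p => rfl)
  calc ∑ b : Fin w, ∑ j : Fin l,
      (N ⟨(r.val * w + b.val) / w, _⟩ ⟨((r.val * w + b.val) + j.val * w) % (l * w), _⟩)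
        * t ⟨((r.val * w + b.val) + j.val * w) % (l * w), _⟩
      = ∑ p : Fin w × Fin l, N r (f p) * t (f p) := by
        rw [Fintype.sum_prod_type]
        refine Finset.sum_congr rfl fun b _ => Finset.sum_congr rfl fun j _ => ?_
        congr 1
        · congr 1
          exact Fin.ext (hrow b)
    _ = ∑ c : Fin (l * w), N r c * t c := this
end

section
/- Let R be an additive commutative monoid, m a natural number, n = 2^m, and v : ZMod n → R. Define the rotate-and-add folding sequence by w₀ = v and, for 0 ≤ s < m, w_{s+1}(i) = w_s(i) + w_s(i + n/2^{s+1}). Then for every index i, w_m(i) = Σ_{j} v(j); in particular the first entry of the fully folded vector equals the sum of all entries of v. -/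
/-!
After `s` folds the entry at `i` is the sum of `v` over the arithmetic progression
`i, i + d, …, i + (2^s - 1) d` with step `d = n / 2^s`: the rotation by `d / 2` adds the
interleaved progression, which together with the old one is the progression of step `d / 2`
and twice the length. After `m` folds the step is `1` and the progression is all of `ZMod n`.
-/

open Finset

theorem Finset.sum_range_two_mul {R : Type*} [AddCommMonoid R] (f : ℕ → R) (n : ℕ) :
    ∑ k ∈ range (2 * n), f k = ∑ k ∈ range n, f (2 * k) + ∑ k ∈ range n, f (2 * k + 1) := by
  induction n with
  | zero => simp
  | succ n ih =>
    rw [Nat.mul_succ, sum_range_succ, sum_range_succ, ih, sum_range_succ, sum_range_succ]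
    abel

theorem ZMod.sum_range_natCast {R : Type*} [AddCommMonoid R] (n : ℕ) [NeZero n]
    (f : ZMod n → R) : ∑ k ∈ range n, f k = ∑ j, f j := by
  refine sum_nbij' (↑) ZMod.val (fun _ _ => mem_univ _) (fun a _ => mem_range.2 a.val_lt)
    (fun k hk => ZMod.val_cast_of_lt (mem_range.1 hk)) (fun a _ => ZMod.natCast_zmod_val a)
    (fun _ _ => rfl)

section Fold

variable {G R : Type*} [AddMonoid G] [AddCommMonoid R]

theorem sum_range_two_mul_nsmul (f : G → R) (i d : G) (n : ℕ) :
    ∑ k ∈ range (2 * n), f (i + k • d) =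
      ∑ k ∈ range n, f (i + k • (2 • d)) + ∑ k ∈ range n, f (i + d + k • (2 • d)) := by
  simp only [sum_range_two_mul, mul_nsmul, succ_nsmul', add_assoc]

/-- `r` counts the folds still to come; the fold with `r` folds after it rotates by `2 ^ r • d`. -/
theorem fold_eq_sum_range_nsmul (W : ℕ → G → R) (d : G) {m : ℕ}
    (hW : ∀ s r, s + 1 + r = m → ∀ i, W (s + 1) i = W s i + W s (i + 2 ^ r • d)) :
    ∀ s r, s + r = m → ∀ i, W s i = ∑ k ∈ range (2 ^ s), W 0 (i + k • 2 ^ r • d) := by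
  intro s
  induction s with
  | zero => simp
  | succ s ih =>
    intro r hsr i
    have hstep : 2 ^ (r + 1) • d = 2 • 2 ^ r • d := by rw [pow_succ, mul_nsmul]
    rw [hW s r hsr, ih (r + 1) (by omega), ih (r + 1) (by omega), hstep, pow_succ',
      sum_range_two_mul_nsmul]

end Fold

theorem rotate_and_add_fold {R : Type*} [AddCommMonoid R] (m : ℕ)
    (v : ZMod (2 ^ m) → R) (W : ℕ → ZMod (2 ^ m) → R)
    (hW0 : W 0 = v)
    (hWs : ∀ s < m, ∀ i : ZMod (2 ^ m),
      W (s + 1) i = W s i + W s (i + ((2 ^ m / 2 ^ (s + 1) : ℕ) : ZMod (2 ^ m)))) :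
    ∀ i : ZMod (2 ^ m), W m i = ∑ j : ZMod (2 ^ m), v j := by
  have hW : ∀ s r, s + 1 + r = m → ∀ i, W (s + 1) i = W s i + W s (i + 2 ^ r • 1) := by
    intro s r hsr i
    rw [hWs s (by omega), Nat.pow_div (by omega) two_pos, Nat.smul_one_eq_cast,
      show m - (s + 1) = r by omega]
  intro i
  calc W m i = ∑ k ∈ range (2 ^ m), v (i + k) := by
        simp only [fold_eq_sum_range_nsmul W 1 hW m 0 (add_zero m), hW0, pow_zero, Nat.cast_one,
          Nat.smul_one_eq_cast]
    _ = ∑ j, v (i + j) := ZMod.sum_range_natCast _ (fun j => v (i + j))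
    _ = ∑ j, v j := Equiv.sum_comp (Equiv.addLeft i) v
end
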